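/- arXiv:1401.7273 — 2 statements merged into one kernel-verified Lean document; each statement's English description precedes it below -/
import Mathlib

section
/- For the q-ary Potts model on the wrapped L×L grid (N = L², β > 0), the partition function satisfies Z ≤ (q + (q^N − q)e^{−8β}) e^{2Nβ}, assuming L ≥ 2. -/
/-!
The Boltzmann weight of a configuration `x` is `exp (β (2N - 2D))`, where `D` counts the bonds of
the torus along which `x` disagrees. A non-constant function on a cycle `ZMod L` changes value at
least twice around it. So if `x` has a non-constant row and a non-constant column, it already has
two disagreeing horizontal and two disagreeing vertical bonds; if instead all its columns are
constant, every row is the same non-constant function, so there are at least two rows and each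
contributes two disagreeing horizontal bonds (symmetrically if all rows are constant). Hence
`D ≥ 4` except for the `q` constant configurations, whose weight is `exp (2Nβ)`.
-/

open Finset

theorem sum_ite_eq_one_neg_one {ι β : Type*} [Fintype ι] [DecidableEq β] (a b : ι → β) :
    ∑ i, (if a i = b i then 1 else -1 : ℝ) = Fintype.card ι - 2 * #{i | a i ≠ b i} := by
  have hsplit : ∀ i, (if a i = b i then 1 else -1 : ℝ) = 1 - 2 * if a i ≠ b i then 1 else 0 :=
    fun i => by by_cases h : a i = b i <;> norm_num [h]
  simp only [hsplit, sum_sub_distrib, ← mul_sum, sum_boole, sum_const, card_univ, nsmul_one]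

theorem sum_le_card_filter_mul_add {ι : Type*} [Fintype ι] (p : ι → Prop) [DecidablePred p]
    {f : ι → ℝ} {a b : ℝ} (ha : ∀ i, p i → f i ≤ a) (hb : ∀ i, ¬p i → f i ≤ b) :
    ∑ i, f i ≤ #{i | p i} * a + (Fintype.card ι - #{i | p i}) * b := by
  have hcard : (#{i | ¬p i} : ℝ) = Fintype.card ι - #{i | p i} := by
    rw [eq_sub_iff_add_eq', ← Nat.cast_add, card_filter_add_card_filter_not, card_univ]
  rw [← sum_filter_add_sum_filter_not _ p, ← hcard, ← nsmul_eq_mul, ← nsmul_eq_mul]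
  gcongr
  · exact sum_le_card_nsmul _ _ _ fun i hi => ha i (mem_filter.mp hi).2
  · exact sum_le_card_nsmul _ _ _ fun i hi => hb i (mem_filter.mp hi).2

theorem card_filter_forall_eq {V α : Type*} [Fintype V] [DecidableEq V] [Nonempty V]
    [Fintype α] [DecidableEq α] : #{x : V → α | ∀ v w, x v = x w} = Fintype.card α := by
  have hconst : ({x : V → α | ∀ v w, x v = x w} : Finset _) =
      univ.map ⟨Function.const V, Function.const_injective⟩ := by
    ext x
    simp only [mem_filter, mem_univ, true_and, mem_map, Function.Embedding.coeFn_mk]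
    refine ⟨fun h => ⟨x (Classical.arbitrary V), funext fun v => h _ v⟩, ?_⟩
    rintro ⟨c, rfl⟩ v w
    rfl
  rw [hconst, card_map, card_univ]

namespace ZMod

variable {α : Type*} {L : ℕ}

theorem apply_add_natCast_eq_of_forall_lt (f : ZMod L → α) (a : ZMod L) (k : ℕ)
    (h : ∀ m < k, f (a + m) = f (a + m + 1)) : f (a + k) = f a := by
  induction k with
  | zero => simp
  | succ k ih =>
    rw [Nat.cast_succ, ← add_assoc, ← h k k.lt_succ_self,
      ih fun m hm => h m (hm.trans k.lt_succ_self)]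

variable [NeZero L]

theorem apply_eq_of_forall_eq_apply_add_one {f : ZMod L → α} (h : ∀ i, f i = f (i + 1))
    (i j : ZMod L) : f i = f j := by
  have := apply_add_natCast_eq_of_forall_lt f i (j - i).val fun _ _ => h _
  rwa [natCast_zmod_val, add_sub_cancel, eq_comm] at this

theorem apply_eq_apply_add_one_of_forall_ne {f : ZMod L → α} (i₀ : ZMod L)
    (h : ∀ i ≠ i₀, f i = f (i + 1)) : f i₀ = f (i₀ + 1) := by
  have hwalk := apply_add_natCast_eq_of_forall_lt f (i₀ + 1) (L - 1) fun m hm => h _ fun heq => by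
    have hdvd : L ∣ m + 1 := by
      rw [← natCast_eq_zero_iff]; push_cast; linear_combination heq
    exact absurd (Nat.le_of_dvd m.succ_pos hdvd) (by omega)
  have hround : i₀ + 1 + ((L - 1 : ℕ) : ZMod L) = i₀ := by
    rw [Nat.cast_sub NeZero.one_le, natCast_self]; ring
  rwa [hround] at hwalk

theorem two_le_card_filter_apply_ne_apply_add_one [DecidableEq α] {f : ZMod L → α}
    (hf : ¬∀ i j, f i = f j) : 2 ≤ #{i | f i ≠ f (i + 1)} := by
  by_contra! hcard
  obtain ⟨i₀, hi₀⟩ := card_le_one_iff_subset_singleton.mp (Nat.le_of_lt_succ hcard)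
  have hne : ∀ i ≠ i₀, f i = f (i + 1) := fun i hi => by
    by_contra hfi
    exact hi (mem_singleton.mp (hi₀ (by simpa using hfi)))
  refine hf (apply_eq_of_forall_eq_apply_add_one fun i => ?_)
  obtain rfl | hi := eq_or_ne i i₀
  · exact apply_eq_apply_add_one_of_forall_ne i hne
  · exact hne i hi

end ZMod

section Torus

variable {α : Type*} [DecidableEq α] {L : ℕ} [NeZero L]

def horizontalDisagreements (x : ZMod L × ZMod L → α) : Finset (ZMod L × ZMod L) :=
  {v | x v ≠ x (v + (1, 0))}

def verticalDisagreements (x : ZMod L × ZMod L → α) : Finset (ZMod L × ZMod L) :=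
  {v | x v ≠ x (v + (0, 1))}

theorem card_verticalDisagreements (x : ZMod L × ZMod L → α) :
    #(verticalDisagreements x) = #(horizontalDisagreements (x ∘ Prod.swap)) :=
  card_nbij' Prod.swap Prod.swap (by intro v; simp [verticalDisagreements, horizontalDisagreements])
    (by intro v; simp [verticalDisagreements, horizontalDisagreements])
    (fun _ _ => rfl) (fun _ _ => rfl)

theorem two_le_card_horizontalDisagreements {x : ZMod L × ZMod L → α} (j : ZMod L)
    (hj : ¬∀ i i', x (i, j) = x (i', j)) : 2 ≤ #(horizontalDisagreements x) :=
  calc 2 ≤ #{i | x (i, j) ≠ x (i + 1, j)} :=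
        ZMod.two_le_card_filter_apply_ne_apply_add_one (f := fun i => x (i, j)) hj
    _ ≤ #(horizontalDisagreements x) :=
        card_le_card_of_injOn (fun i => (i, j))
          (fun i hi => by simpa [horizontalDisagreements] using hi)
          (fun _ _ _ _ h => congrArg Prod.fst h)

theorem four_le_card_horizontalDisagreements {x : ZMod L × ZMod L → α}
    (hcol : ∀ i j j', x (i, j) = x (i, j')) (hx : ¬∀ v w, x v = x w) :
    4 ≤ #(horizontalDisagreements x) := by
  have hrow : ¬∀ i i', x (i, 0) = x (i', 0) := fun h =>
    hx fun v w => by rw [← hcol v.1 0 v.2, ← hcol w.1 0 w.2, h]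
  have hprod :
      horizontalDisagreements x = ({i | x (i, 0) ≠ x (i + 1, 0)} : Finset _) ×ˢ univ := by
    ext ⟨i, j⟩
    simp [horizontalDisagreements, hcol i j 0, hcol (i + 1) j 0]
  have h2 := ZMod.two_le_card_filter_apply_ne_apply_add_one (f := fun i => x (i, 0)) hrow
  have hL : 2 ≤ L := h2.trans ((card_le_univ _).trans (ZMod.card L).le)
  rw [hprod, card_product, card_univ, ZMod.card]
  nlinarith

theorem four_le_card_disagreements {x : ZMod L × ZMod L → α} (hx : ¬∀ v w, x v = x w) :
    4 ≤ #(horizontalDisagreements x) + #(verticalDisagreements x) := by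
  rw [card_verticalDisagreements]
  by_cases hcol : ∀ i j j', x (i, j) = x (i, j')
  · have := four_le_card_horizontalDisagreements hcol hx
    omega
  by_cases hrow : ∀ j i i', x (i, j) = x (i', j)
  · have := four_le_card_horizontalDisagreements (x := x ∘ Prod.swap) (fun j i i' => hrow j i i')
      fun h => hx fun v w => by simpa using h v.swap w.swap
    omega
  obtain ⟨j, hj⟩ := not_forall.mp hrow
  obtain ⟨i, hi⟩ := not_forall.mp hcol
  have := two_le_card_horizontalDisagreements j hj
  have := two_le_card_horizontalDisagreements (x := x ∘ Prod.swap) i hi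
  omega

end Torus

section Weight

variable {α : Type*} [DecidableEq α] {L : ℕ} [NeZero L] {β : ℝ} {g : α → α → ℝ}

theorem prod_exp_potts_eq (hg : ∀ a b, g a b = if a = b then 1 else -1)
    (x : ZMod L × ZMod L → α) :
    ∏ v, Real.exp (β * g (x v) (x (v + (1, 0)))) * Real.exp (β * g (x v) (x (v + (0, 1)))) =
      Real.exp (β * (2 * (L * L : ℕ) -
        2 * (#(horizontalDisagreements x) + #(verticalDisagreements x) : ℕ))) := by
  have hH :
      ∑ v, g (x v) (x (v + (1, 0))) = (L * L : ℕ) - 2 * #(horizontalDisagreements x) := by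
    simp only [hg, sum_ite_eq_one_neg_one, Fintype.card_prod, ZMod.card]
    rfl
  have hV : ∑ v, g (x v) (x (v + (0, 1))) = (L * L : ℕ) - 2 * #(verticalDisagreements x) := by
    simp only [hg, sum_ite_eq_one_neg_one, Fintype.card_prod, ZMod.card]
    rfl
  rw [prod_mul_distrib, ← Real.exp_sum, ← Real.exp_sum, ← Real.exp_add, ← mul_sum, ← mul_sum,
    ← mul_add, hH, hV]
  push_cast
  congr 1
  ring

theorem prod_exp_potts_le (hβ : 0 ≤ β) (hg : ∀ a b, g a b = if a = b then 1 else -1)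
    (x : ZMod L × ZMod L → α) :
    ∏ v, Real.exp (β * g (x v) (x (v + (1, 0)))) * Real.exp (β * g (x v) (x (v + (0, 1)))) ≤
      Real.exp (2 * (L * L : ℕ) * β) := by
  rw [prod_exp_potts_eq hg, Real.exp_le_exp]
  have hD := Nat.cast_nonneg (α := ℝ) (#(horizontalDisagreements x) + #(verticalDisagreements x))
  nlinarith

theorem prod_exp_potts_le_of_not_forall_eq (hβ : 0 ≤ β)
    (hg : ∀ a b, g a b = if a = b then 1 else -1) {x : ZMod L × ZMod L → α}
    (hx : ¬∀ v w, x v = x w) :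
    ∏ v, Real.exp (β * g (x v) (x (v + (1, 0)))) * Real.exp (β * g (x v) (x (v + (0, 1)))) ≤
      Real.exp (-(8 * β)) * Real.exp (2 * (L * L : ℕ) * β) := by
  have h4 : (4 : ℝ) ≤ (#(horizontalDisagreements x) + #(verticalDisagreements x) : ℕ) := by
    exact_mod_cast four_le_card_disagreements hx
  rw [prod_exp_potts_eq hg, ← Real.exp_add, Real.exp_le_exp]
  nlinarith

end Weight

theorem potts_partition_function_refined_upper_bound_general (L q : ℕ) [NeZero L] [NeZero q]
    (β : ℝ) (hβ : 0 < β) (N : ℕ) (hN : N = L * L)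
    (g : ZMod q → ZMod q → ℝ) (hg : ∀ a b, g a b = if a = b then 1 else -1)
    (Z : ℝ)
    (hZ : Z = ∑ x : (ZMod L × ZMod L) → ZMod q, ∏ v : ZMod L × ZMod L,
      Real.exp (β * g (x v) (x (v + ((1 : ZMod L), (0 : ZMod L))))) *
        Real.exp (β * g (x v) (x (v + ((0 : ZMod L), (1 : ZMod L)))))) :
    Z ≤ ((q : ℝ) + ((q : ℝ) ^ N - (q : ℝ)) * Real.exp (-(8 * β))) *
          Real.exp (2 * (N : ℝ) * β) := by
  classical
  subst hZ hN
  refine (sum_le_card_filter_mul_add (fun x => ∀ v w, x v = x w)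
    (fun x _ => prod_exp_potts_le hβ.le hg x)
    (fun _ hx => prod_exp_potts_le_of_not_forall_eq hβ.le hg hx)).trans_eq ?_
  rw [card_filter_forall_eq, Fintype.card_fun, Fintype.card_prod, ZMod.card, ZMod.card]
  push_cast
  ring

theorem potts_partition_function_refined_upper_bound (L q : ℕ) [NeZero L] [NeZero q]
    (hL : 2 ≤ L) (hq : 2 ≤ q)
    (β : ℝ) (hβ : 0 < β) (N : ℕ) (hN : N = L * L)
    (g : ZMod q → ZMod q → ℝ) (hg : ∀ a b, g a b = if a = b then 1 else -1)
    (Z : ℝ)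
    (hZ : Z = ∑ x : (ZMod L × ZMod L) → ZMod q, ∏ v : ZMod L × ZMod L,
      Real.exp (β * g (x v) (x (v + ((1 : ZMod L), (0 : ZMod L))))) *
        Real.exp (β * g (x v) (x (v + ((0 : ZMod L), (1 : ZMod L)))))) :
    Z ≤ ((q : ℝ) + ((q : ℝ) ^ N - (q : ℝ)) * Real.exp (-(8 * β))) *
          Real.exp (2 * (N : ℝ) * β) :=
  potts_partition_function_refined_upper_bound_general L q β hβ N hN g hg Z hZ
end

section
/- Let q ≥ 2 and β > 0, and define the clock-model local function κ_clock : ℤ_q → ℝ by κ_clock(x) = e^{β cos(2πx/q)}. Then its Fourier transform κ̂_clock(y) = Σ_{x∈ℤ_q} κ_clock(x) e^{2πi xy/q} is real and strictly positive for every y ∈ ℤ_q. -/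
/-!
Write `e = ZMod.stdAddChar`, so that `e x = exp (2πi x/q)` and `2 cos (2πx/q) = e x + e (-x)`.
By the binomial theorem and orthogonality of characters,
`∑ₓ cosⁿ(2πx/q) e(xy) = q 2⁻ⁿ ∑ {C(n,k) | 2k - n + y = 0 in ℤ_q}`, a nonnegative real number.
Expanding `exp (β cos θ)` as a power series therefore writes `κ̂(y)` as a series of nonnegative
reals, and its term `n = y.val` is positive because `k = 0` contributes `C(n,0) = 1`.
-/

open Finset Complex ZMod Real

variable {q : ℕ} [NeZero q]

lemma two_mul_cos_eq_stdAddChar_add (x : ZMod q) :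
    2 * Complex.cos (2 * π * x.val / q) = stdAddChar x + stdAddChar (-x) := by
  rw [AddChar.map_neg_eq_inv, stdAddChar_apply, toCircle_apply, ← Complex.exp_neg, two_cos]
  ring_nf

lemma cexp_val_mul_val_eq_stdAddChar (x y : ZMod q) :
    Complex.exp (2 * π * I * ((x.val : ℂ) * (y.val : ℂ)) / q) = stdAddChar (x * y) := by
  have h : x * y = (((x.val * y.val : ℕ) : ℤ) : ZMod q) := by simp
  rw [h, stdAddChar_coe]
  push_cast
  rfl

lemma stdAddChar_pow_mul_pow_mul {n k : ℕ} (hk : k ≤ n) (x y : ZMod q) :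
    stdAddChar x ^ k * stdAddChar (-x) ^ (n - k) * stdAddChar (x * y) =
      stdAddChar (x * (2 * k - n + y : ZMod q)) := by
  rw [← AddChar.map_nsmul_eq_pow, ← AddChar.map_nsmul_eq_pow, ← AddChar.map_add_eq_mul,
    ← AddChar.map_add_eq_mul]
  congr 1
  simp only [nsmul_eq_mul, Nat.cast_sub hk]
  ring

lemma cos_pow_mul_stdAddChar_eq_sum (n : ℕ) (x y : ZMod q) :
    Complex.cos (2 * π * x.val / q) ^ n * stdAddChar (x * y) =
      ∑ k ∈ range (n + 1), (n.choose k / 2 ^ n : ℂ) * stdAddChar (x * (2 * k - n + y : ZMod q)) := by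
  rw [← mul_div_cancel_left₀ (Complex.cos _) two_ne_zero, two_mul_cos_eq_stdAddChar_add,
    div_pow, add_pow, sum_div, sum_mul]
  refine sum_congr rfl fun k hk => ?_
  rw [← stdAddChar_pow_mul_pow_mul (Nat.lt_succ_iff.mp (mem_range.mp hk))]
  ring

def cosPowWeight (q n : ℕ) (y : ZMod q) : ℕ :=
  ∑ k ∈ range (n + 1), if (2 * k - n + y : ZMod q) = 0 then n.choose k else 0

lemma cosPowWeight_val_pos (y : ZMod q) : 0 < cosPowWeight q y.val y := by
  refine lt_of_lt_of_le ?_ (single_le_sum (fun _ _ => Nat.zero_le _)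
    (mem_range.mpr (Nat.succ_pos y.val)))
  simp

lemma sum_cos_pow_mul_stdAddChar (n : ℕ) (y : ZMod q) :
    ∑ x : ZMod q, Complex.cos (2 * π * x.val / q) ^ n * stdAddChar (x * y) =
      ((q * cosPowWeight q n y / 2 ^ n : ℝ) : ℂ) := by
  classical
  simp_rw [cos_pow_mul_stdAddChar_eq_sum]
  rw [sum_comm]
  simp_rw [← mul_sum, AddChar.sum_mulShift _ (isPrimitive_stdAddChar q), cosPowWeight]
  push_cast
  rw [ZMod.card, mul_sum, sum_div]
  refine sum_congr rfl fun k _ => ?_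
  split_ifs <;> push_cast <;> ring

open Nat in
lemma hasSum_fourier_exp_mul_cos (β : ℝ) (y : ZMod q) :
    HasSum (fun n : ℕ => ((β ^ n / n ! * (q * cosPowWeight q n y / 2 ^ n) : ℝ) : ℂ))
      (∑ x : ZMod q, (Real.exp (β * Real.cos (2 * π * x.val / q)) : ℂ) * stdAddChar (x * y)) := by
  have hx : ∀ x : ZMod q, HasSum
      (fun n : ℕ => ((β : ℂ) * Complex.cos (2 * π * x.val / q)) ^ n / n ! * stdAddChar (x * y))
      ((Real.exp (β * Real.cos (2 * π * x.val / q)) : ℂ) * stdAddChar (x * y)) := by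
    intro x
    have hexp := NormedSpace.expSeries_div_hasSum_exp ((β : ℂ) * Complex.cos (2 * π * x.val / q))
    rw [← Complex.exp_eq_exp_ℂ] at hexp
    push_cast
    exact hexp.mul_right _
  convert hasSum_sum fun x _ => hx x with n
  rw [Complex.ofReal_mul, ← sum_cos_pow_mul_stdAddChar, mul_sum]
  refine sum_congr rfl fun x _ => ?_
  push_cast
  ring

theorem clock_kappa_fourier_positive_general (q : ℕ) [NeZero q]
    (β : ℝ) (hβ : 0 < β)
    (κ : ZMod q → ℝ)
    (hκ : ∀ x : ZMod q, κ x = Real.exp (β * Real.cos (2 * Real.pi * (x.val : ℝ) / q)))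
    (κhat : ZMod q → ℂ)
    (hκhat : ∀ y : ZMod q, κhat y =
      ∑ x : ZMod q, (κ x : ℂ) *
        Complex.exp (2 * Real.pi * Complex.I * ((x.val : ℂ) * (y.val : ℂ)) / q)) :
    ∀ y : ZMod q, (κhat y).im = 0 ∧ 0 < (κhat y).re := by
  intro y
  have hsum := hasSum_fourier_exp_mul_cos β y
  simp only [← cexp_val_mul_val_eq_stdAddChar, ← hκ, ← hκhat] at hsum
  refine ⟨(hasSum_zero.unique (by simpa only [ofReal_im] using hasSum_im hsum)).symm, ?_⟩
  refine hasSum_lt (f := 0) (i := y.val) (fun n => ?_) ?_ hasSum_zero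
    (by simpa only [ofReal_re] using hasSum_re hsum)
  · positivity
  · have hq : (0 : ℝ) < q := Nat.cast_pos.mpr (NeZero.pos q)
    have hw : (0 : ℝ) < cosPowWeight q y.val y := Nat.cast_pos.mpr (cosPowWeight_val_pos y)
    simp only [Pi.zero_apply]
    positivity

theorem clock_kappa_fourier_positive (q : ℕ) [NeZero q] (hq : 2 ≤ q)
    (β : ℝ) (hβ : 0 < β)
    (κ : ZMod q → ℝ)
    (hκ : ∀ x : ZMod q, κ x = Real.exp (β * Real.cos (2 * Real.pi * (x.val : ℝ) / q)))
    (κhat : ZMod q → ℂ)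
    (hκhat : ∀ y : ZMod q, κhat y =
      ∑ x : ZMod q, (κ x : ℂ) *
        Complex.exp (2 * Real.pi * Complex.I * ((x.val : ℂ) * (y.val : ℂ)) / q)) :
    ∀ y : ZMod q, (κhat y).im = 0 ∧ 0 < (κhat y).re :=
  clock_kappa_fourier_positive_general q β hβ κ hκ κhat hκhat
end
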